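/- Let s, t ∈ ℂ with |s|² ≥ |t|² + 1 and let w ∈ ℂ. Then e^{−|w|²/2} · sup_{z∈ℂ} |K^{(s,t)}(z,w)|·e^{−|z|²/2} ≤ C · exp( −(|s|²−|t|²−1)·(|s|²−1)·|w|²/(2|s|²·(3|s|²−|t|²+1)) ), where C = |s|^{−1/2}·(2|s|/√(4|s|²−|t|²))^{2(4|s|²−|t|²)/(3|s|²−|t|²+1)}. -/

import Mathlib

/-!
Write the exponent of `K^{(s,t)}(·,w)` as `u z² + v z - c` with `u = t/(2s)`, `v = w̄/s`
and `c = t̄ w̄²/(2s)`. Since `4|u|² = |t|²/|s|² < 1`, completing the square bounds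
`Re(u z² + v z) - |z|²/2` uniformly in `z`, which leaves a function of `|s|`, `|t|`, `|w|`
and `Re c` only. Bounding `Re c ≥ -|t||w|²/(2|s|)` gives the Gaussian decay rate in `w`, and the factor multiplying
`|s|^{-1/2}` in `C` is at least `1`.
-/

open MeasureTheory Real Filter
open scoped ENNReal

/-- Principal branch of the complex square root. -/
noncomputable def csqrt (z : ℂ) : ℂ := z ^ ((1 : ℂ) / 2)

/-- The canonical integral kernel `K^{(s,t)}(z,w)`. -/
noncomputable def Kst (s t z w : ℂ) : ℂ :=
  (csqrt s)⁻¹ *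
    Complex.exp ((t * z ^ 2 - (starRingEnd ℂ) t * ((starRingEnd ℂ) w) ^ 2
      + 2 * z * (starRingEnd ℂ) w) / (2 * s))

open ComplexConjugate

theorem re_quadratic_sub_half_norm_sq_le (u v z : ℂ) (hu : 4 * ‖u‖ ^ 2 < 1) :
    (u * z ^ 2 + v * z).re - ‖z‖ ^ 2 / 2 ≤
      (2 * (conj u * v ^ 2).re + ‖v‖ ^ 2) / (2 * (1 - 4 * ‖u‖ ^ 2)) := by
  set d : ℝ := 1 - 4 * ‖u‖ ^ 2 with hd_def
  have hd : 0 < d := by linarith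
  set δ : ℂ := d * z - (2 * conj u * v + conj v)
  -- `δ = d (z - z₀)`, where `z₀ = (2 ū v + v̄) / d` is the critical point of the left-hand side
  have completed_square : d * (d * (‖z‖ ^ 2 - 2 * (u * z ^ 2 + v * z).re)
        + 2 * (conj u * v ^ 2).re + ‖v‖ ^ 2) = ‖δ‖ ^ 2 - 2 * (u * δ ^ 2).re := by
    simp only [δ, hd_def, Complex.sq_norm]
    simp only [Complex.normSq_apply, Complex.mul_re, Complex.mul_im,
      Complex.sub_re, Complex.sub_im, Complex.add_re, Complex.add_im, Complex.conj_re,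
      Complex.conj_im, Complex.ofReal_re, Complex.ofReal_im, Complex.re_ofNat, Complex.im_ofNat,
      pow_two]
    ring
  have hre : (u * δ ^ 2).re ≤ ‖u‖ * ‖δ‖ ^ 2 :=
    (Complex.re_le_norm _).trans_eq (by simp)
  have hu2 : 2 * ‖u‖ ≤ 1 := by nlinarith [norm_nonneg u]
  have hpos : 0 ≤ d * (‖z‖ ^ 2 - 2 * (u * z ^ 2 + v * z).re)
      + 2 * (conj u * v ^ 2).re + ‖v‖ ^ 2 := by
    refine nonneg_of_mul_nonneg_right (a := d) ?_ hd
    rw [completed_square]; nlinarith [sq_nonneg ‖δ‖]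
  rw [le_div_iff₀ (by positivity)]
  nlinarith

theorem exponent_le_decay_rate {a b ρ X : ℝ} (ha : 0 ≤ a) (hb : 0 ≤ b) (hab : b ^ 2 + 1 ≤ a ^ 2)
    (hX : -(b * ρ ^ 2) ≤ 2 * a * X) :
    (2 * X + ρ ^ 2) / (2 * (a ^ 2 - b ^ 2)) - X - ρ ^ 2 / 2 ≤
      -((a ^ 2 - b ^ 2 - 1) * (a ^ 2 - 1) * ρ ^ 2) / (2 * a ^ 2 * (3 * a ^ 2 - b ^ 2 + 1)) := by
  have hba : b < a := by nlinarith
  have ha' : 0 < a := by linarith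
  have hc : 0 < 3 * a ^ 2 - b ^ 2 + 1 := by nlinarith
  have key : (a ^ 2 - 1) * ρ ^ 2 / (a ^ 2 * (3 * a ^ 2 - b ^ 2 + 1)) ≤
      (2 * X + ρ ^ 2) / (a ^ 2 - b ^ 2) := by
    calc (a ^ 2 - 1) * ρ ^ 2 / (a ^ 2 * (3 * a ^ 2 - b ^ 2 + 1))
        ≤ ρ ^ 2 / (a * (a + b)) := by
          rw [div_le_div_iff₀ (by positivity) (by positivity)]
          -- `a²(3a² - b² + 1) - (a² - 1) a (a + b) = a (a (a - b)(2a + b) + 2a + b)`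
          have : 0 ≤ a * (a * (a - b) * (2 * a + b) + 2 * a + b) := by
            have := sub_pos.2 hba; positivity
          nlinarith [mul_nonneg (sq_nonneg ρ) this]
      _ = ρ ^ 2 * (a - b) / a / (a ^ 2 - b ^ 2) := by
          have : a - b ≠ 0 := by linarith
          have : a ^ 2 - b ^ 2 ≠ 0 := by nlinarith
          field_simp
          ring
      _ ≤ (2 * X + ρ ^ 2) / (a ^ 2 - b ^ 2) := by
          have : 0 < a ^ 2 - b ^ 2 := by linarith
          gcongr
          rw [div_le_iff₀ ha']; linarith
  have hsplit : (2 * X + ρ ^ 2) / (2 * (a ^ 2 - b ^ 2)) - X - ρ ^ 2 / 2 =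
      -((a ^ 2 - b ^ 2 - 1) * ((2 * X + ρ ^ 2) / (a ^ 2 - b ^ 2)) / 2) := by
    have : a ^ 2 - b ^ 2 ≠ 0 := by linarith
    field_simp; ring
  rw [hsplit, neg_div, neg_le_neg_iff]
  calc (a ^ 2 - b ^ 2 - 1) * (a ^ 2 - 1) * ρ ^ 2 / (2 * a ^ 2 * (3 * a ^ 2 - b ^ 2 + 1))
      = (a ^ 2 - b ^ 2 - 1) * ((a ^ 2 - 1) * ρ ^ 2 / (a ^ 2 * (3 * a ^ 2 - b ^ 2 + 1))) / 2 := by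
        field_simp
    _ ≤ (a ^ 2 - b ^ 2 - 1) * ((2 * X + ρ ^ 2) / (a ^ 2 - b ^ 2)) / 2 := by
        gcongr; linarith

noncomputable def kstExponent (s t z w : ℂ) : ℂ :=
  (t * z ^ 2 - conj t * conj w ^ 2 + 2 * z * conj w) / (2 * s)

theorem norm_csqrt (z : ℂ) : ‖csqrt z‖ = ‖z‖ ^ (1 / 2 : ℝ) := by
  rw [csqrt, show (1 / 2 : ℂ) = ((1 / 2 : ℝ) : ℂ) by norm_num, Complex.norm_cpow_real]

theorem norm_Kst (s t z w : ℂ) :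
    ‖Kst s t z w‖ = ‖s‖ ^ (-(1 : ℝ) / 2) * Real.exp (kstExponent s t z w).re := by
  rw [Kst, norm_mul, norm_inv, norm_csqrt, Complex.norm_exp, neg_div,
    Real.rpow_neg (norm_nonneg s), kstExponent]

theorem re_kstExponent_sub_half_norm_sq_le {s t : ℂ} (hts : ‖t‖ < ‖s‖) (z w : ℂ) :
    (kstExponent s t z w).re - ‖z‖ ^ 2 / 2 ≤
      (2 * (conj t * conj w ^ 2 / (2 * s)).re + ‖w‖ ^ 2) / (2 * (‖s‖ ^ 2 - ‖t‖ ^ 2))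
        - (conj t * conj w ^ 2 / (2 * s)).re := by
  have ha : 0 < ‖s‖ := (norm_nonneg t).trans_lt hts
  have hs : s ≠ 0 := norm_pos_iff.1 ha
  have hg : 0 < ‖s‖ ^ 2 - ‖t‖ ^ 2 := by nlinarith [norm_nonneg t]
  set u := t / (2 * s)
  set v := conj w / s
  have hsplit : kstExponent s t z w = u * z ^ 2 + v * z - conj t * conj w ^ 2 / (2 * s) := by
    simp only [kstExponent, u, v]; ring
  have hd : 1 - 4 * ‖u‖ ^ 2 = (‖s‖ ^ 2 - ‖t‖ ^ 2) / ‖s‖ ^ 2 := by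
    simp only [u, norm_div, norm_mul, Complex.norm_two]
    field_simp
    ring
  have hu : 4 * ‖u‖ ^ 2 < 1 := by
    have : 0 < 1 - 4 * ‖u‖ ^ 2 := hd ▸ by positivity
    linarith
  have hv : ‖v‖ = ‖w‖ / ‖s‖ := by simp [v]
  have huv : (conj u * v ^ 2).re = (conj t * conj w ^ 2 / (2 * s)).re / ‖s‖ ^ 2 := by
    have h : conj u * v ^ 2 = conj t * conj w ^ 2 / (2 * s) / ((‖s‖ ^ 2 : ℝ) : ℂ) := by
      rw [← Complex.normSq_eq_norm_sq, ← Complex.mul_conj]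
      have : conj s ≠ 0 := by simpa using hs
      simp only [u, v, map_div₀, map_mul, map_ofNat]
      field_simp
    rw [h, Complex.div_ofReal_re]
  have hrate : (2 * (conj u * v ^ 2).re + ‖v‖ ^ 2) / (2 * (1 - 4 * ‖u‖ ^ 2)) =
      (2 * (conj t * conj w ^ 2 / (2 * s)).re + ‖w‖ ^ 2) / (2 * (‖s‖ ^ 2 - ‖t‖ ^ 2)) := by
    rw [huv, hd, hv]
    generalize (conj t * conj w ^ 2 / (2 * s)).re = X
    field_simp
  rw [hsplit, Complex.sub_re, ← hrate]
  linarith [re_quadratic_sub_half_norm_sq_le u v z hu]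

theorem neg_mul_sq_le_two_mul_re {s t : ℂ} (hs : s ≠ 0) (w : ℂ) :
    -(‖t‖ * ‖w‖ ^ 2) ≤ 2 * ‖s‖ * (conj t * conj w ^ 2 / (2 * s)).re := by
  have hs' : ‖s‖ ≠ 0 := norm_ne_zero_iff.2 hs
  calc -(‖t‖ * ‖w‖ ^ 2) = 2 * ‖s‖ * -‖conj t * conj w ^ 2 / (2 * s)‖ := by
        rw [norm_div, norm_mul, norm_mul, norm_pow, Complex.norm_conj, Complex.norm_conj,
          Complex.norm_two]
        field_simp
    _ ≤ _ := mul_le_mul_of_nonneg_left (abs_le.1 (Complex.abs_re_le_norm _)).1 (by positivity)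

theorem re_kstExponent_sub_le {s t : ℂ} (hst : ‖t‖ ^ 2 + 1 ≤ ‖s‖ ^ 2) (z w : ℂ) :
    (kstExponent s t z w).re - ‖z‖ ^ 2 / 2 - ‖w‖ ^ 2 / 2 ≤
      -((‖s‖ ^ 2 - ‖t‖ ^ 2 - 1) * (‖s‖ ^ 2 - 1) * ‖w‖ ^ 2) /
        (2 * ‖s‖ ^ 2 * (3 * ‖s‖ ^ 2 - ‖t‖ ^ 2 + 1)) := by
  have hts : ‖t‖ < ‖s‖ := by nlinarith [norm_nonneg t, norm_nonneg s]
  have hs : s ≠ 0 := norm_pos_iff.1 ((norm_nonneg t).trans_lt hts)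
  have := re_kstExponent_sub_half_norm_sq_le hts z w
  have := exponent_le_decay_rate (norm_nonneg s) (norm_nonneg t) hst (neg_mul_sq_le_two_mul_re hs w)
  linarith

theorem one_le_two_mul_div_sqrt_rpow {a b : ℝ} (hb : 0 ≤ b) (hba : b < a) :
    1 ≤ (2 * a / √(4 * a ^ 2 - b ^ 2)) ^ (2 * (4 * a ^ 2 - b ^ 2) / (3 * a ^ 2 - b ^ 2 + 1)) := by
  have hsqrt : √(4 * a ^ 2 - b ^ 2) ≤ 2 * a := by
    rw [Real.sqrt_le_left (by linarith)]; nlinarith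
  refine Real.one_le_rpow ?_ (div_nonneg (by nlinarith) (by nlinarith))
  rw [one_le_div (Real.sqrt_pos.2 (by nlinarith))]
  exact hsqrt

theorem stmt15 (s t : ℂ) (hst : ‖s‖ ^ 2 ≥ ‖t‖ ^ 2 + 1) (w : ℂ)
    (C : ℝ)
    (hC : C = (‖s‖) ^ (-(1 : ℝ) / 2) *
      (2 * ‖s‖ / Real.sqrt (4 * ‖s‖ ^ 2 - ‖t‖ ^ 2)) ^
        (2 * (4 * ‖s‖ ^ 2 - ‖t‖ ^ 2) /
          (3 * ‖s‖ ^ 2 - ‖t‖ ^ 2 + 1))) :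
    (⨆ z : ℂ, ENNReal.ofReal (Real.exp (-‖w‖ ^ 2 / 2) *
        (‖Kst s t z w‖ * Real.exp (-‖z‖ ^ 2 / 2))))
      ≤ ENNReal.ofReal (C *
          Real.exp (-((‖s‖ ^ 2 - ‖t‖ ^ 2 - 1) * (‖s‖ ^ 2 - 1) *
              ‖w‖ ^ 2) /
            (2 * ‖s‖ ^ 2 * (3 * ‖s‖ ^ 2 - ‖t‖ ^ 2 + 1)))) := by
  have hts : ‖t‖ < ‖s‖ := by nlinarith [norm_nonneg t, norm_nonneg s]
  have hC_ge : ‖s‖ ^ (-(1 : ℝ) / 2) ≤ C :=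
    hC ▸ le_mul_of_one_le_right (by positivity) (one_le_two_mul_div_sqrt_rpow (norm_nonneg t) hts)
  refine iSup_le fun z => ENNReal.ofReal_le_ofReal ?_
  calc Real.exp (-‖w‖ ^ 2 / 2) * (‖Kst s t z w‖ * Real.exp (-‖z‖ ^ 2 / 2))
      = ‖s‖ ^ (-(1 : ℝ) / 2) *
          Real.exp ((kstExponent s t z w).re - ‖z‖ ^ 2 / 2 - ‖w‖ ^ 2 / 2) := by
        rw [norm_Kst, sub_sub, sub_eq_add_neg, Real.exp_add, neg_add, Real.exp_add]
        ring_nf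
    _ ≤ _ := mul_le_mul hC_ge (Real.exp_le_exp.2 (re_kstExponent_sub_le hst z w))
        (Real.exp_nonneg _) ((Real.rpow_nonneg (norm_nonneg s) _).trans hC_ge)
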